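/- arXiv:2107.00345 — 4 statements merged into one kernel-verified Lean document; each statement's English description precedes it below -/
import Mathlib

section
/- The inequality deg_A(f·g) ≤ deg_A(f) + deg_A(g) can be strict for nonzero signomials: for A = {0, 1, k} ⊂ ℝ with integer k ≥ 3 and f(x) = exp(x), one has deg_A(f^p) = p for 1 ≤ p < k, while deg_A(f^k) = 1. -/
open Finset

noncomputable section

/-- One-dimensional exponential monomial `e^a(x) = exp(a·x)`. -/
def expm1 (a x : ℝ) : ℝ := Real.exp (a * x)

/-- `f` is a signomial supported within `S ⊆ ℝ`. -/
def SuppIn1 (f : ℝ → ℝ) (S : Set ℝ) : Prop :=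
  ∃ (T : Finset ℝ) (c : ℝ → ℝ), ↑T ⊆ S ∧ f = fun x => ∑ a ∈ T, c a * expm1 a x

/-- The set `A_d = { Σ_{a∈A} w_a a : w ∈ ℕ^A, Σ w_a ≤ d }`. -/
def Aset1 (A : Finset ℝ) (d : ℕ) : Set ℝ :=
  { v | ∃ w : ℝ → ℕ, (∑ a ∈ A, w a) ≤ d ∧ v = ∑ a ∈ A, (w a : ℝ) * a }

/-- The `A`-degree of a signomial. -/
def degA1 (A : Finset ℝ) (f : ℝ → ℝ) : ℕ :=
  sInf { d | SuppIn1 f (Aset1 A d) }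

def expHom (a : ℝ) : Multiplicative ℝ →* ℝ where
  toFun := fun x => Real.exp (a * Multiplicative.toAdd x)
  map_one' := by simp
  map_mul' := by intro x y; simp [mul_add, Real.exp_add]

lemma expHom_inj : Function.Injective expHom := by
  intro a b h
  have := congrArg (fun f => (f : Multiplicative ℝ →* ℝ) (Multiplicative.ofAdd 1)) h
  simp [expHom, Real.exp_eq_exp] at this
  exact this

lemma key {T : Finset ℝ} {c : ℝ → ℝ}
    (h : ∀ x, ∑ a ∈ T, c a * Real.exp (a * x) = 0) : ∀ a ∈ T, c a = 0 := by
  have li := (linearIndependent_monoidHom (Multiplicative ℝ) ℝ).comp expHom expHom_inj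
  rw [linearIndependent_iff'] at li
  apply li T c
  funext x
  simpa [expHom, Finset.sum_apply] using h (Multiplicative.toAdd x)

lemma mem_of_supp {p : ℝ} {S : Set ℝ}
    (h : SuppIn1 (fun x => Real.exp (p * x)) S) : p ∈ S := by
  obtain ⟨T, c, hT, heq⟩ := h
  by_cases hp : p ∈ T
  · exact hT hp
  · exfalso
    have h0 : ∀ x, ∑ a ∈ insert p T,
        (fun a => if a = p then (-1 : ℝ) else c a) a * Real.exp (a * x) = 0 := by
      intro x
      rw [Finset.sum_insert hp]
      have hx := congrFun heq x
      simp only [expm1] at hx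
      have : ∑ a ∈ T, (fun a => if a = p then (-1 : ℝ) else c a) a * Real.exp (a * x)
          = ∑ a ∈ T, c a * Real.exp (a * x) := by
        apply Finset.sum_congr rfl
        intro a ha
        have : a ≠ p := fun h' => hp (h' ▸ ha)
        simp [this]
      rw [this, ← hx]
      simp
    have := key h0 p (Finset.mem_insert_self p T)
    simp at this

theorem stmt1 (k : ℕ) (hk : 3 ≤ k) :
    (∀ p : ℕ, 1 ≤ p → p < k →
      degA1 ({0, 1, (k : ℝ)} : Finset ℝ) (fun x => (Real.exp x) ^ p) = p) ∧
    degA1 ({0, 1, (k : ℝ)} : Finset ℝ) (fun x => (Real.exp x) ^ k) = 1 := by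
  have hk3 : (3 : ℝ) ≤ (k : ℝ) := by exact_mod_cast hk
  have h01 : (0 : ℝ) ≠ 1 := by norm_num
  have h0k : (0 : ℝ) ≠ (k : ℝ) := by linarith
  have h1k : (1 : ℝ) ≠ (k : ℝ) := by linarith
  -- the weight sum computation over A = {0, 1, k}
  have hsum : ∀ (w : ℝ → ℕ), (∑ a ∈ ({0, 1, (k : ℝ)} : Finset ℝ), w a) = w 0 + w 1 + w k ∧
      (∑ a ∈ ({0, 1, (k : ℝ)} : Finset ℝ), (w a : ℝ) * a) = (w 1 : ℝ) + (w k : ℝ) * k := by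
    intro w
    rw [show ({0, 1, (k : ℝ)} : Finset ℝ) = insert 0 (insert 1 {(k : ℝ)}) from rfl]
    constructor
    · rw [Finset.sum_insert (by simp [h01, h0k]), Finset.sum_insert (by simp [h1k]),
        Finset.sum_singleton]; ring
    · rw [Finset.sum_insert (by simp [h01, h0k]), Finset.sum_insert (by simp [h1k]),
        Finset.sum_singleton]; ring
  -- exp x ^ p = exp (p * x)
  have hpow : ∀ p : ℕ, (fun x => (Real.exp x) ^ p) = fun x => Real.exp ((p : ℝ) * x) := by
    intro p; funext x; rw [← Real.exp_nat_mul]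
  -- single-term support: if m ∈ A_d then SuppIn1 (exp (m x)) (A_d)
  have hsingle : ∀ (m : ℝ) (d : ℕ), m ∈ Aset1 ({0, 1, (k : ℝ)} : Finset ℝ) d →
      SuppIn1 (fun x => Real.exp (m * x)) (Aset1 ({0, 1, (k : ℝ)} : Finset ℝ) d) := by
    intro m d hm
    refine ⟨{m}, fun _ => 1, by simpa using hm, ?_⟩
    funext x
    simp [expm1]
  constructor
  · intro p hp1 hpk
    apply le_antisymm
    · -- degree ≤ p : p ∈ A_p via w = p·δ₁
      apply Nat.sInf_le
      rw [Set.mem_setOf_eq, hpow]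
      apply hsingle
      refine ⟨fun a => if a = 1 then p else 0, ?_, ?_⟩
      · rw [(hsum _).1]; simp [h01.symm, h1k] <;> omega
      · rw [(hsum _).2]; simp [h01.symm, h1k] <;> omega
    · -- degree ≥ p
      apply le_csInf ⟨p, by
        rw [Set.mem_setOf_eq, hpow]
        apply hsingle
        exact ⟨fun a => if a = 1 then p else 0, by rw [(hsum _).1]; simp [h01.symm, h1k] <;> omega,
          by rw [(hsum _).2]; simp [h01.symm, h1k] <;> omega⟩⟩
      rintro d hd
      rw [Set.mem_setOf_eq, hpow] at hd
      obtain ⟨w, hw, hv⟩ := mem_of_supp hd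
      rw [(hsum _).1] at hw
      rw [(hsum _).2] at hv
      -- (p : ℝ) = w 1 + w k * k, p < k forces w k = 0
      have hwk : w k = 0 := by
        by_contra h
        have h1 : (1 : ℝ) ≤ (w k : ℝ) := by exact_mod_cast Nat.one_le_iff_ne_zero.2 h
        have hkp : (p : ℝ) < (k : ℝ) := by exact_mod_cast hpk
        nlinarith [(Nat.cast_nonneg (w 1) : (0:ℝ) ≤ (w 1 : ℝ))]
      rw [hwk] at hv hw
      have : (p : ℝ) = (w 1 : ℝ) := by simpa using hv
      have hw1 : w 1 = p := by exact_mod_cast this.symm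
      omega
  · apply le_antisymm
    · apply Nat.sInf_le
      rw [Set.mem_setOf_eq, hpow]
      apply hsingle
      refine ⟨fun a => if a = (k : ℝ) then 1 else 0, ?_, ?_⟩
      · rw [(hsum _).1]; simp [h0k, h1k] <;> omega
      · rw [(hsum _).2]; simp [h0k, h1k] <;> omega
    · apply le_csInf ⟨1, by
        rw [Set.mem_setOf_eq, hpow]
        apply hsingle
        exact ⟨fun a => if a = (k : ℝ) then 1 else 0,
          by rw [(hsum _).1]; simp [h0k, h1k] <;> omega, by rw [(hsum _).2]; simp [h0k, h1k] <;> omega⟩⟩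
      rintro d hd
      rw [Set.mem_setOf_eq, hpow] at hd
      obtain ⟨w, hw, hv⟩ := mem_of_supp hd
      rw [(hsum _).1] at hw
      rw [(hsum _).2] at hv
      by_contra h
      have hd0 : d = 0 := by omega
      subst hd0
      have : w 0 = 0 ∧ w 1 = 0 ∧ w k = 0 := by omega
      rw [this.2.1, this.2.2] at hv
      simp at hv
      linarith
end
end

section
/- With A = {-1, 0, 1, 2} ⊂ ℝ and f(x) = exp(3x), the A-degree of f equals 2, and yet for every signomial g in the one-dimensional space S = { c·exp(-x) : c ∈ ℝ } one has deg_A(g·f) ≤ 1. -/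
open Finset

noncomputable section

lemma li_exp : LinearIndependent ℝ (fun a : ℝ => fun x : ℝ => Real.exp (a * x)) := by
  let φ : ℝ → (Multiplicative ℝ →* ℝ) := fun a =>
    { toFun := fun x => Real.exp (a * Multiplicative.toAdd x)
      map_one' := by simp
      map_mul' := by intro x y; simp [mul_add, Real.exp_add] }
  have hinj : Function.Injective φ := by
    intro a b hab
    have h := congrArg (fun ψ : Multiplicative ℝ →* ℝ => ψ (Multiplicative.ofAdd (1:ℝ))) hab
    simp only [φ, MonoidHom.coe_mk, OneHom.coe_mk, toAdd_ofAdd, mul_one] at h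
    exact Real.exp_injective h
  exact (linearIndependent_monoidHom (Multiplicative ℝ) ℝ).comp φ hinj

theorem stmt2 :
    degA1 ({-1, 0, 1, 2} : Finset ℝ) (fun x => Real.exp (3 * x)) = 2 ∧
    ∀ c : ℝ,
      degA1 ({-1, 0, 1, 2} : Finset ℝ)
        (fun x => (c * Real.exp (-x)) * Real.exp (3 * x)) ≤ 1 := by
  classical
  set A : Finset ℝ := {-1, 0, 1, 2} with hA
  have hsum : ∀ w : ℝ → ℕ, (∑ a ∈ A, w a) = w (-1) + w 0 + w 1 + w 2 := by
    intro w
    simp [hA, Finset.sum_insert, Finset.mem_insert]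
    norm_num
    ring
  have hsum2 : ∀ w : ℝ → ℕ, (∑ a ∈ A, (w a : ℝ) * a)
      = -(w (-1) : ℝ) + (w 1 : ℝ) + 2 * (w 2 : ℝ) := by
    intro w
    simp [hA, Finset.sum_insert, Finset.mem_insert]
    norm_num
    ring
  -- 3 ∉ Aset1 A 1
  have h3 : (3 : ℝ) ∉ Aset1 A 1 := by
    rintro ⟨w, hw, hv⟩
    rw [hsum] at hw
    rw [hsum2] at hv
    have h1 : w 1 ≤ 1 := by omega
    have h2 : w 2 ≤ 1 := by omega
    have h12 : w 1 + w 2 ≤ 1 := by omega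
    have : (w 1 : ℝ) + (w 2 : ℝ) ≤ 1 := by exact_mod_cast h12
    have hneg : (0:ℝ) ≤ (w (-1) : ℝ) := by positivity
    nlinarith [this, hneg]
  -- exp(3x) not supported in Aset1 A 1
  have hnot : ¬ SuppIn1 (fun x => Real.exp (3 * x)) (Aset1 A 1) := by
    rintro ⟨T, c, hT, hf⟩
    have h3T : (3:ℝ) ∉ T := fun h => h3 (hT h)
    have hli := linearIndependent_iff'.mp li_exp (insert 3 T)
      (fun a => if a = 3 then 1 else -c a)
    have hz : (∑ a ∈ insert 3 T, (if a = 3 then (1:ℝ) else -c a) •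
        (fun x : ℝ => Real.exp (a * x))) = 0 := by
      rw [Finset.sum_insert h3T]
      funext x
      simp only [Pi.add_apply, Finset.sum_apply, Pi.smul_apply, smul_eq_mul, Pi.zero_apply,
        if_pos rfl, one_mul]
      have hrw : ∑ a ∈ T, (if a = 3 then (1:ℝ) else -c a) * Real.exp (a * x)
          = -∑ a ∈ T, c a * Real.exp (a * x) := by
        rw [show -∑ a ∈ T, c a * Real.exp (a * x) = ∑ a ∈ T, -(c a * Real.exp (a * x)) by simp]
        refine Finset.sum_congr rfl fun a ha => ?_
        rw [if_neg (by rintro rfl; exact h3T ha)]; ring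
      rw [hrw]
      have hx := congrFun hf x
      simp only [expm1] at hx
      rw [← hx]; norm_num [mul_comm]
    have := hli hz 3 (Finset.mem_insert_self _ _)
    simp at this
  -- SuppIn1 at degree 2
  have hmem2 : SuppIn1 (fun x => Real.exp (3 * x)) (Aset1 A 2) := by
    refine ⟨{3}, fun _ => 1, ?_, ?_⟩
    · intro v hv
      simp at hv
      subst hv
      refine ⟨fun a => if a = 1 then 1 else if a = 2 then 1 else 0, ?_, ?_⟩
      · rw [hsum]; norm_num
      · rw [hsum2]; norm_num
    · funext x; simp [expm1]
  constructor
  · rw [degA1]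
    have hne : Set.Nonempty {d | SuppIn1 (fun x => Real.exp (3*x)) (Aset1 A d)} := ⟨2, hmem2⟩
    have hm := Nat.sInf_mem hne
    refine le_antisymm (Nat.sInf_le hmem2) ?_
    by_contra hlt
    push_neg at hlt
    set d := sInf {d | SuppIn1 (fun x => Real.exp (3*x)) (Aset1 A d)} with hd
    have hd1 : d ≤ 1 := by omega
    apply hnot
    obtain ⟨T, c, hT, hf⟩ := hm
    refine ⟨T, c, ?_, hf⟩
    intro v hv
    obtain ⟨w, hw, hval⟩ := hT hv
    exact ⟨w, hw.trans hd1, hval⟩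
  · intro c
    rw [degA1]
    apply Nat.sInf_le
    refine ⟨{2}, fun _ => c, ?_, ?_⟩
    · intro v hv
      simp at hv
      subst hv
      refine ⟨fun a => if a = 2 then 1 else 0, ?_, ?_⟩
      · rw [hsum]; norm_num
      · rw [hsum2]; norm_num
    · funext x
      rw [Finset.sum_singleton]
      simp only [expm1]
      rw [mul_assoc, ← Real.exp_add]
      ring_nf
end
end

section
/- Let K ⊂ ℝ^n be a closed set such that every unbounded sequence (x_t) ⊂ K satisfies limsup_t max_{α∈A} ⟨α, x_t⟩ = +∞. Then for every ℓ ≥ 1, the set { x ∈ K : Σ_{α∈A} exp⟨α,x⟩ ≤ ℓ } is compact. -/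
open Finset Filter

noncomputable section

theorem stmt15 {n : ℕ} (A : Finset (Fin n → ℝ)) (h0 : (0 : Fin n → ℝ) ∈ A)
    (K : Set (Fin n → ℝ)) (hK : IsClosed K)
    (hcoer : ∀ x : ℕ → (Fin n → ℝ), (∀ t, x t ∈ K) →
      ¬ Bornology.IsBounded (Set.range x) →
      Filter.limsup
        (fun t => ((A.sup' ⟨0, h0⟩ fun α => ∑ i, α i * x t i : ℝ) : EReal))
        Filter.atTop = ⊤) :
    ∀ ℓ : ℝ, 1 ≤ ℓ →
      IsCompact { x ∈ K | ∑ α ∈ A, Real.exp (∑ i, α i * x i) ≤ ℓ } := by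
  intro ℓ hℓ
  have hℓpos : (0:ℝ) < ℓ := lt_of_lt_of_le one_pos hℓ
  have hcont : Continuous fun x : Fin n → ℝ => ∑ α ∈ A, Real.exp (∑ i, α i * x i) := by
    apply continuous_finset_sum
    intro α _
    exact Real.continuous_exp.comp
      (continuous_finset_sum _ fun i _ => continuous_const.mul (continuous_apply i))
  have hclosed : IsClosed { x ∈ K | ∑ α ∈ A, Real.exp (∑ i, α i * x i) ≤ ℓ } :=
    hK.inter (isClosed_le hcont continuous_const)
  -- key bound
  have hbd : ∀ x : Fin n → ℝ, (∑ α ∈ A, Real.exp (∑ i, α i * x i)) ≤ ℓ →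
      ∀ α ∈ A, (∑ i, α i * x i) ≤ Real.log ℓ := by
    intro x hx α hα
    have h1 : Real.exp (∑ i, α i * x i) ≤ ∑ β ∈ A, Real.exp (∑ i, β i * x i) :=
      Finset.single_le_sum (f := fun β : Fin n → ℝ => Real.exp (∑ i, β i * x i))
        (fun β _ => (Real.exp_pos _).le) hα
    exact (Real.le_log_iff_exp_le hℓpos).2 (h1.trans hx)
  have hbdd : Bornology.IsBounded { x ∈ K | ∑ α ∈ A, Real.exp (∑ i, α i * x i) ≤ ℓ } := by
    by_contra hnb
    have hex : ∀ t : ℕ, ∃ x, (x ∈ K ∧ ∑ α ∈ A, Real.exp (∑ i, α i * x i) ≤ ℓ) ∧ (t : ℝ) < ‖x‖ := by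
      intro t
      by_contra hcon
      push_neg at hcon
      refine hnb (isBounded_iff_forall_norm_le.2 ⟨t, ?_⟩)
      intro y hy
      exact hcon y hy
    choose x hxS hxn using hex
    have hxr : ¬ Bornology.IsBounded (Set.range x) := by
      intro hb
      obtain ⟨C, hC⟩ := isBounded_iff_forall_norm_le.1 hb
      obtain ⟨t, ht⟩ := exists_nat_gt C
      have h1 := hC (x t) (Set.mem_range_self t)
      have h2 := hxn t
      linarith
    have hlim := hcoer x (fun t => (hxS t).1) hxr
    have hle : Filter.limsup
        (fun t => ((A.sup' ⟨0, h0⟩ fun α => ∑ i, α i * x t i : ℝ) : EReal))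
        Filter.atTop ≤ ((Real.log ℓ : ℝ) : EReal) := by
      apply Filter.limsup_le_of_le
      · exact Filter.IsBoundedUnder.isCoboundedUnder_le
          ⟨⊥, Filter.eventually_map.2 (Filter.Eventually.of_forall fun t => bot_le)⟩
      · apply Filter.Eventually.of_forall
        intro t
        have h3 : (A.sup' ⟨0, h0⟩ fun α => ∑ i, α i * x t i) ≤ Real.log ℓ :=
          Finset.sup'_le _ _ fun α hα => hbd (x t) (hxS t).2 α hα
        exact_mod_cast h3
    rw [hlim] at hle
    exact absurd hle (not_le.2 (EReal.coe_lt_top _))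
  exact Metric.isCompact_of_isClosed_isBounded hclosed hbdd
end
end

section
/- Let X ⊂ ℝ^n be convex, A ⊂ ℝ^n finite, β ∈ A, and c ∈ ℝ^A with c_α ≥ 0 for all α ≠ β. If there exists ν ∈ ℝ^A with ν_α ≥ 0 for α ≠ β, Σ_α ν_α = 0, and sup_{x∈X} ⟨ν, −Ax⟩ + Σ_{α≠β} ν_α log(ν_α/c_α) + ν_β ≤ c_β, then the signomial f = Σ_α c_α exp⟨α,·⟩ is nonnegative on X. -/
open Finset

noncomputable section

/-- The exponential "monomial" `e^α(x) = exp⟨α,x⟩`. -/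
def expm {n : ℕ} (α x : Fin n → ℝ) : ℝ := Real.exp (∑ i, α i * x i)

lemma key_age (c ν t : ℝ) (hc : 0 ≤ c) (hν : 0 ≤ ν) (h0 : c = 0 → ν = 0) :
    ν * t + ν - ν * Real.log (ν / c) ≤ c * Real.exp t := by
  rcases eq_or_lt_of_le hν with h | h
  · rw [← h]
    simp only [zero_mul, add_zero, sub_zero, zero_add]
    positivity
  · have hcpos : 0 < c := by
      rcases eq_or_lt_of_le hc with h' | h'
      · exfalso; have := h0 h'.symm; linarith
      · exact h'
    have h1 := Real.add_one_le_exp (t - Real.log (ν / c))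
    have h2 : Real.exp (t - Real.log (ν / c)) = Real.exp t * (c / ν) := by
      rw [Real.exp_sub, Real.exp_log (by positivity)]
      field_simp
    have h3 := mul_le_mul_of_nonneg_left h1 hν
    rw [h2] at h3
    have h4 : ν * (Real.exp t * (c / ν)) = c * Real.exp t := by
      field_simp
    rw [h4] at h3
    nlinarith [h3]

theorem stmt18 {n : ℕ} (X : Set (Fin n → ℝ)) (hX : Convex ℝ X)
    (A : Finset (Fin n → ℝ)) (β : Fin n → ℝ) (hβ : β ∈ A)
    (c : (Fin n → ℝ) → ℝ) (hc : ∀ α ∈ A, α ≠ β → 0 ≤ c α)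
    (ν : (Fin n → ℝ) → ℝ)
    (hν : ∀ α ∈ A, α ≠ β → 0 ≤ ν α)
    (hsum : ∑ α ∈ A, ν α = 0)
    -- the convention `ν_α log(ν_α / 0) = +∞` for `ν_α > 0`: such terms are ruled out
    (hconv : ∀ α ∈ A, α ≠ β → c α = 0 → ν α = 0)
    (hineq : ∀ x ∈ X,
      (∑ α ∈ A, ν α * (-(∑ i, α i * x i)))
        + (∑ α ∈ A.erase β, ν α * Real.log (ν α / c α)) + ν β ≤ c β) :
    ∀ x ∈ X, 0 ≤ ∑ α ∈ A, c α * expm α x := by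
  intro x hx
  set T : (Fin n → ℝ) → ℝ := fun α => ∑ i, α i * x i with hT
  set P : ℝ := ∑ α ∈ A.erase β, ν α * T α with hP
  set L : ℝ := ∑ α ∈ A.erase β, ν α * Real.log (ν α / c α) with hL
  set E : ℝ := ∑ α ∈ A.erase β, c α * Real.exp (T α - T β) with hE
  have herase : ∑ α ∈ A.erase β, ν α = -ν β := by
    have h := Finset.add_sum_erase A ν hβ
    linarith [h, hsum]
  have hkey : ∀ α ∈ A.erase β,
      ν α * (T α - T β) + ν α - ν α * Real.log (ν α / c α)
        ≤ c α * Real.exp (T α - T β) := by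
    intro α hα
    have h1 := Finset.mem_of_mem_erase hα
    have h2 := Finset.ne_of_mem_erase hα
    exact key_age _ _ _ (hc α h1 h2) (hν α h1 h2) (hconv α h1 h2)
  have hsumkey := Finset.sum_le_sum hkey
  have hLHS : (∑ α ∈ A.erase β, (ν α * (T α - T β) + ν α
        - ν α * Real.log (ν α / c α)))
      = P + ν β * T β - ν β - L := by
    have hcg : ∀ α ∈ A.erase β,
        ν α * (T α - T β) + ν α - ν α * Real.log (ν α / c α)
          = (ν α * T α - ν α * Real.log (ν α / c α)) + (ν α - ν α * T β) := by
      intro α _; ring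
    rw [Finset.sum_congr rfl hcg, Finset.sum_add_distrib, Finset.sum_sub_distrib,
      Finset.sum_sub_distrib, ← Finset.sum_mul, herase]
    simp only [hP, hL]
    ring
  rw [hLHS] at hsumkey
  have hA : ∑ α ∈ A, ν α * (-(T α)) = -(ν β * T β) - P := by
    rw [← Finset.add_sum_erase A (fun α => ν α * (-(T α))) hβ]
    have hcg : ∀ α ∈ A.erase β, ν α * (-(T α)) = -(ν α * T α) := by
      intro α _; ring
    rw [Finset.sum_congr rfl hcg, Finset.sum_neg_distrib]
    simp only [hP]; ring
  have hineqx := hineq x hx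
  rw [hA] at hineqx
  have hEge : -c β ≤ E := by
    have : P + ν β * T β - ν β - L ≥ -c β := by linarith
    linarith [hsumkey]
  have hfinal : ∑ α ∈ A, c α * expm α x = Real.exp (T β) * (c β + E) := by
    rw [← Finset.add_sum_erase A (fun α => c α * expm α x) hβ]
    rw [mul_add, hE, Finset.mul_sum]
    congr 1
    · simp only [expm, hT]; ring
    · apply Finset.sum_congr rfl
      intro α _
      simp only [expm, hT]
      rw [show (∑ i, α i * x i) - (∑ i, β i * x i) = T α - T β from rfl]
      rw [← mul_assoc, mul_comm (Real.exp (T β)) (c α), mul_assoc, ← Real.exp_add]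
      congr 2
      simp only [hT]
      ring
  rw [hfinal]
  have h0 : 0 ≤ c β + E := by linarith
  exact mul_nonneg (Real.exp_pos _).le h0
end
end
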